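/- Let d ≥ 1, let μ be a positive Radon measure on ℝ^d, and let (χ_k)_{k≥1} be a sequence of mollifiers with supp χ_k ⊂ B(0, 1/k), χ_k ≥ 0, ∫ χ_k = 1, and 0 ≤ χ_k ≤ C₀ k^d for some constant C₀ depending only on d. Set μ_k := μ * χ_k (so μ_k is the function y ↦ ∫ χ_k(y − z) dμ(z)). Then for every x ∈ ℝ^d, every r > 0, and every k, (1/r) ∫_{B(x,r)} |y − x|^{1−d} μ_k(y) dy ≤ C · M(μ)(x), where C is a positive constant depending only on d and C₀. -/

import Mathlib

open MeasureTheory Filter Metric Set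
open scoped ENNReal Topology

noncomputable section

/-- The (unrestricted) maximal function of a measure:
`M(μ)(x) = sup_{s>0} μ(B(x,s))/|B(x,s)|`. -/
def maximalMeas (d : ℕ) (μ : Measure (EuclideanSpace ℝ (Fin d)))
    (x : EuclideanSpace ℝ (Fin d)) : ℝ≥0∞ :=
  ⨆ (s : ℝ) (_ : 0 < s), μ (ball x s) / volume (ball x s)

/-!
Write `δ = 1/k`. Since `χ_k ≤ C₀ k^d` vanishes off `B(0, δ)`, `μ_k(y) ≤ C₀ k^d μ(B(y, δ))`, and by
Tonelli `∫_{B(x,r)} |y-x|^{1-d} μ(B(y,δ)) dy = ∫ g dμ` with `g(z) = ∫_{B(z,δ) ∩ B(x,r)} |y-x|^{1-d} dy`.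
For `|z-x| < 2δ` use `g ≲ r` and `μ(B(x,2δ)) ≲ δ^d M(μ)(x)`; for `|z-x| ≥ 2δ` the kernel is comparable
to `|z-x|^{1-d}` on `B(z,δ)`, so `g(z) ≲ δ^d |z-x|^{1-d}`, and `g(z) = 0` unless `|z-x| < 2r`.
Both pieces rest on the dyadic-annuli estimate: `ν(B(x,s)) ≤ K s^d` for all `s` gives
`∫_{B(x,R)} |z-x|^{1-d} dν ≤ 2^d K R`. The factor `δ^d` then cancels `k^d`.
-/

open Module

theorem div_two_rpow_one_sub_natCast {s : ℝ} (hs : 0 < s) (d : ℕ) :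
    (s / 2) ^ (1 - (d : ℝ)) = 2 ^ d / 2 * s ^ (1 - (d : ℝ)) := by
  rw [Real.rpow_sub_natCast (by positivity), Real.rpow_sub_natCast hs.ne', Real.rpow_one,
    Real.rpow_one, div_pow]
  field_simp

theorem exists_mem_ball_diff_ball_div_two_pow {X : Type*} [PseudoMetricSpace X] {x z : X} {R : ℝ}
    (hz : z ∈ ball x R) (hzx : 0 < dist z x) :
    ∃ j : ℕ, z ∈ ball x (R / 2 ^ j) \ ball x (R / 2 ^ (j + 1)) := by
  classical
  have h : ∃ j : ℕ, z ∉ ball x (R / 2 ^ (j + 1)) := by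
    obtain ⟨n, hn⟩ := pow_unbounded_of_one_lt (R / dist z x) one_lt_two
    refine ⟨n, fun hzn => ?_⟩
    rw [mem_ball, lt_div_iff₀ (by positivity)] at hzn
    rw [div_lt_iff₀ hzx] at hn
    have : (2 : ℝ) ^ n ≤ 2 ^ (n + 1) := pow_le_pow_right₀ one_le_two n.le_succ
    nlinarith
  refine ⟨Nat.find h, ?_, Nat.find_spec h⟩
  rcases hj : Nat.find h with _ | i
  · simpa using hz
  · simpa using Nat.find_min h (hj ▸ Nat.lt_succ_self i)

theorem setLIntegral_ball_diff_dist_rpow_le {X : Type*} [MetricSpace X] [MeasurableSpace X]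
    {ν : Measure X} {x : X} {d : ℕ} (hd : 1 ≤ d) {K : ℝ≥0∞}
    (hK : ∀ s, 0 < s → ν (ball x s) ≤ K * ENNReal.ofReal (s ^ d)) {R : ℝ} (hR : 0 < R) :
    ∫⁻ z in ball x R \ {x}, ENNReal.ofReal (dist z x ^ (1 - (d : ℝ))) ∂ν
      ≤ K * ENNReal.ofReal (2 ^ d * R) := by
  set A : ℕ → Set X := fun j => ball x (R / 2 ^ j) \ ball x (R / 2 ^ (j + 1))
  have hcover : ball x R \ {x} ⊆ ⋃ j, A j := fun z ⟨hz, hzx⟩ =>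
    mem_iUnion.2 (exists_mem_ball_diff_ball_div_two_pow hz (dist_pos.2 hzx))
  have hA : ∀ j, ∫⁻ z in A j, ENNReal.ofReal (dist z x ^ (1 - (d : ℝ))) ∂ν
      ≤ K * ENNReal.ofReal (2 ^ d * R / 2 / 2 ^ j) := by
    intro j
    set a := R / 2 ^ j
    have ha : 0 < a := by positivity
    have hdist : ∀ z ∈ A j, ENNReal.ofReal (dist z x ^ (1 - (d : ℝ)))
        ≤ ENNReal.ofReal ((a / 2) ^ (1 - (d : ℝ))) := by
      rintro z ⟨-, hz⟩
      refine ENNReal.ofReal_le_ofReal (Real.rpow_le_rpow_of_nonpos (by positivity) ?_ ?_)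
      · simpa [a, pow_succ, div_div] using hz
      · simpa using hd
    calc ∫⁻ z in A j, ENNReal.ofReal (dist z x ^ (1 - (d : ℝ))) ∂ν
        ≤ ∫⁻ _ in A j, ENNReal.ofReal ((a / 2) ^ (1 - (d : ℝ))) ∂ν :=
          setLIntegral_mono measurable_const hdist
      _ = ENNReal.ofReal ((a / 2) ^ (1 - (d : ℝ))) * ν (A j) := setLIntegral_const _ _
      _ ≤ ENNReal.ofReal ((a / 2) ^ (1 - (d : ℝ))) * (K * ENNReal.ofReal (a ^ d)) := by
          gcongr
          exact (measure_mono sdiff_subset).trans (hK a ha)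
      _ = K * ENNReal.ofReal (2 ^ d * R / 2 / 2 ^ j) := by
          rw [mul_left_comm, ← ENNReal.ofReal_mul (by positivity), div_two_rpow_one_sub_natCast ha,
            Real.rpow_sub_natCast ha.ne', Real.rpow_one]
          congr 2
          simp only [a]
          field_simp
  calc ∫⁻ z in ball x R \ {x}, ENNReal.ofReal (dist z x ^ (1 - (d : ℝ))) ∂ν
      ≤ ∫⁻ z in ⋃ j, A j, ENNReal.ofReal (dist z x ^ (1 - (d : ℝ))) ∂ν := lintegral_mono_set hcover
    _ ≤ ∑' j, ∫⁻ z in A j, ENNReal.ofReal (dist z x ^ (1 - (d : ℝ))) ∂ν := lintegral_iUnion_le _ _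
    _ ≤ ∑' j, K * ENNReal.ofReal (2 ^ d * R / 2 / 2 ^ j) := ENNReal.tsum_le_tsum hA
    _ = K * ENNReal.ofReal (2 ^ d * R) := by
      rw [ENNReal.tsum_mul_left, ← ENNReal.ofReal_tsum_of_nonneg (fun j => by positivity)
        (summable_geometric_two' _), tsum_geometric_two']

theorem measure_ball_le_maximalMeas_mul {d : ℕ} (μ : Measure (EuclideanSpace ℝ (Fin d)))
    (x : EuclideanSpace ℝ (Fin d)) {s : ℝ} (hs : 0 < s) :
    μ (ball x s) ≤ maximalMeas d μ x * volume (ball x s) :=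
  (ENNReal.div_le_iff (measure_ball_pos _ _ hs).ne' measure_ball_lt_top.ne).1 <|
    le_iSup₂ (f := fun (s : ℝ) (_ : 0 < s) => μ (ball x s) / volume (ball x s)) s hs

theorem lintegral_ofReal_sub_le_mul_measure_ball {G : Type*} [SeminormedAddCommGroup G]
    [MeasurableSpace G] [OpensMeasurableSpace G] (μ : Measure G) {χ : G → ℝ} {δ c : ℝ}
    (hsupp : Function.support χ ⊆ ball 0 δ) (hle : ∀ v, χ v ≤ c) (y : G) :
    ∫⁻ z, ENNReal.ofReal (χ (y - z)) ∂μ ≤ ENNReal.ofReal c * μ (ball y δ) := by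
  rw [← lintegral_indicator_const measurableSet_ball]
  refine lintegral_mono fun z => ?_
  by_cases hz : z ∈ ball y δ
  · rw [indicator_of_mem hz]
    exact ENNReal.ofReal_le_ofReal (hle _)
  · have : χ (y - z) = 0 := Function.notMem_support.1 fun h =>
      hz (by rw [mem_ball, dist_eq_norm']; simpa using hsupp h)
    simp [this]

theorem lintegral_mul_measure_ball_eq {X : Type*} [PseudoMetricSpace X] [MeasurableSpace X]
    [OpensMeasurableSpace X] [SecondCountableTopology X] (ν μ : Measure X) [SFinite ν] [SFinite μ]
    {f : X → ℝ≥0∞} (hf : Measurable f) (s : Set X) (δ : ℝ) :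
    ∫⁻ y in s, f y * μ (ball y δ) ∂ν = ∫⁻ z, ∫⁻ y in ball z δ ∩ s, f y ∂ν ∂μ := by
  have hsymm : ∀ y z, (ball z δ).indicator f y = (ball y δ).indicator (fun _ => f y) z := by
    intro y z
    simp only [indicator, mem_ball, dist_comm]
  have hmeas : Measurable (Function.uncurry fun y z => (ball z δ).indicator f y) :=
    (hf.comp measurable_fst).indicator
      (measurableSet_lt (measurable_fst.dist measurable_snd) measurable_const)
  calc ∫⁻ y in s, f y * μ (ball y δ) ∂ν
      = ∫⁻ y in s, ∫⁻ z, (ball z δ).indicator f y ∂μ ∂ν := by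
        simp_rw [hsymm, lintegral_indicator_const measurableSet_ball]
    _ = ∫⁻ z, ∫⁻ y in s, (ball z δ).indicator f y ∂ν ∂μ :=
        lintegral_lintegral_swap hmeas.aemeasurable
    _ = ∫⁻ z, ∫⁻ y in ball z δ ∩ s, f y ∂ν ∂μ := by
        simp_rw [lintegral_indicator measurableSet_ball, Measure.restrict_restrict measurableSet_ball]

section FiniteDimensional

variable {E : Type*} [NormedAddCommGroup E] [NormedSpace ℝ E] [FiniteDimensional ℝ E]
  [MeasurableSpace E] [BorelSpace E] [Nontrivial E] (ν : Measure E) [ν.IsAddHaarMeasure]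

theorem addHaar_ball_eq_ofReal (x : E) {s : ℝ} (hs : 0 ≤ s) :
    ν (ball x s) = ENNReal.ofReal (ν.real (ball 0 1) * s ^ finrank ℝ E) := by
  rw [ν.addHaar_ball x hs, ENNReal.ofReal_mul measureReal_nonneg,
    ofReal_measureReal measure_ball_lt_top.ne, mul_comm]

theorem setLIntegral_ball_diff_dist_rpow_le_of_le_addHaar (μ : Measure E) {x : E} {K : ℝ≥0∞}
    (hK : ∀ s, 0 < s → μ (ball x s) ≤ K * ν (ball x s)) {R : ℝ} (hR : 0 < R) :
    ∫⁻ z in ball x R \ {x}, ENNReal.ofReal (dist z x ^ (1 - (finrank ℝ E : ℝ))) ∂μ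
      ≤ K * ENNReal.ofReal (ν.real (ball 0 1) * 2 ^ finrank ℝ E * R) := by
  rw [mul_assoc, ENNReal.ofReal_mul measureReal_nonneg, ← mul_assoc]
  refine setLIntegral_ball_diff_dist_rpow_le finrank_pos (fun s hs => ?_) hR
  rw [mul_assoc, ← ENNReal.ofReal_mul measureReal_nonneg, ← addHaar_ball_eq_ofReal ν x hs.le]
  exact hK s hs

theorem setLIntegral_ball_dist_rpow_le (x : E) {ρ : ℝ} (hρ : 0 < ρ) :
    ∫⁻ y in ball x ρ, ENNReal.ofReal (dist y x ^ (1 - (finrank ℝ E : ℝ))) ∂ν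
      ≤ ENNReal.ofReal (ν.real (ball 0 1) * 2 ^ finrank ℝ E * ρ) := by
  rw [← setLIntegral_congr (sdiff_ae_eq_self.2 (measure_mono_null inter_subset_right
    (measure_singleton x)))]
  simpa using setLIntegral_ball_diff_dist_rpow_le_of_le_addHaar ν ν (fun s _ => (one_mul _).ge) hρ

theorem setLIntegral_ball_inter_ball_dist_rpow_le_of_two_mul_le {x z : E} {r δ : ℝ} (hδ : 0 < δ)
    (hz : 2 * δ ≤ dist z x) :
    ∫⁻ y in ball z δ ∩ ball x r, ENNReal.ofReal (dist y x ^ (1 - (finrank ℝ E : ℝ))) ∂ν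
      ≤ (ball x (2 * r) \ {x}).indicator (fun z => ENNReal.ofReal
          (2 ^ finrank ℝ E / 2 * ν.real (ball 0 1) * δ ^ finrank ℝ E)
          * ENNReal.ofReal (dist z x ^ (1 - (finrank ℝ E : ℝ)))) z := by
  set d := finrank ℝ E
  have hzx : 0 < dist z x := by linarith
  by_cases hzr : dist z x < r + δ
  swap
  · have hempty : ball z δ ∩ ball x r = ∅ :=
      (ball_disjoint_ball (by linarith)).inter_eq
    simp [hempty]
  have hmem : z ∈ ball x (2 * r) \ {x} := ⟨mem_ball.2 (by linarith), fun h => by simp_all⟩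
  have hpt : ∀ y ∈ ball z δ ∩ ball x r, ENNReal.ofReal (dist y x ^ (1 - (d : ℝ)))
      ≤ ENNReal.ofReal (2 ^ d / 2 * dist z x ^ (1 - (d : ℝ))) := by
    rintro y ⟨hy, -⟩
    have : dist z x / 2 ≤ dist y x := by
      linarith [dist_triangle z y x, mem_ball'.1 hy]
    rw [← div_two_rpow_one_sub_natCast hzx]
    exact ENNReal.ofReal_le_ofReal (Real.rpow_le_rpow_of_nonpos (by positivity) this
      (sub_nonpos.2 (Nat.one_le_cast.2 finrank_pos)))
  rw [indicator_of_mem hmem]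
  calc ∫⁻ y in ball z δ ∩ ball x r, ENNReal.ofReal (dist y x ^ (1 - (d : ℝ))) ∂ν
      ≤ ∫⁻ _ in ball z δ ∩ ball x r, ENNReal.ofReal (2 ^ d / 2 * dist z x ^ (1 - (d : ℝ))) ∂ν :=
        setLIntegral_mono measurable_const hpt
    _ = ENNReal.ofReal (2 ^ d / 2 * dist z x ^ (1 - (d : ℝ))) * ν (ball z δ ∩ ball x r) :=
        setLIntegral_const _ _
    _ ≤ ENNReal.ofReal (2 ^ d / 2 * dist z x ^ (1 - (d : ℝ))) * ν (ball z δ) := by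
        gcongr
        exact inter_subset_left
    _ = _ := by
        rw [addHaar_ball_eq_ofReal ν z hδ.le, ← ENNReal.ofReal_mul (by positivity),
          ← ENNReal.ofReal_mul (by positivity)]
        simp only [d]
        ring_nf

variable (μ : Measure E) {x : E} {K : ℝ≥0∞} {r δ : ℝ}

theorem setLIntegral_ball_lintegral_ball_inter_ball_dist_rpow_le
    (hK : ∀ s, 0 < s → μ (ball x s) ≤ K * ν (ball x s)) (hr : 0 < r) (hδ : 0 < δ) :
    ∫⁻ z in ball x (2 * δ), ∫⁻ y in ball z δ ∩ ball x r,
        ENNReal.ofReal (dist y x ^ (1 - (finrank ℝ E : ℝ))) ∂ν ∂μ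
      ≤ K * ENNReal.ofReal (4 ^ finrank ℝ E * ν.real (ball 0 1) ^ 2 * δ ^ finrank ℝ E * r) := by
  set d := finrank ℝ E
  set ω := ν.real (ball (0 : E) 1)
  calc ∫⁻ z in ball x (2 * δ), ∫⁻ y in ball z δ ∩ ball x r,
        ENNReal.ofReal (dist y x ^ (1 - (d : ℝ))) ∂ν ∂μ
      ≤ ∫⁻ _ in ball x (2 * δ), ENNReal.ofReal (ω * 2 ^ d * r) ∂μ :=
        setLIntegral_mono measurable_const fun z _ =>
          (lintegral_mono_set inter_subset_right).trans (setLIntegral_ball_dist_rpow_le ν x hr)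
    _ = ENNReal.ofReal (ω * 2 ^ d * r) * μ (ball x (2 * δ)) := setLIntegral_const _ _
    _ ≤ ENNReal.ofReal (ω * 2 ^ d * r) * (K * ENNReal.ofReal (ω * (2 * δ) ^ d)) := by
        rw [← addHaar_ball_eq_ofReal ν x (by positivity)]
        gcongr
        exact hK _ (by positivity)
    _ = K * ENNReal.ofReal (4 ^ d * ω ^ 2 * δ ^ d * r) := by
        rw [mul_left_comm, ← ENNReal.ofReal_mul (by positivity)]
        congr 2
        rw [mul_pow, show (4 : ℝ) ^ d = 2 ^ d * 2 ^ d by rw [← mul_pow]; norm_num]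
        ring

theorem setLIntegral_compl_ball_lintegral_ball_inter_ball_dist_rpow_le
    (hK : ∀ s, 0 < s → μ (ball x s) ≤ K * ν (ball x s)) (hr : 0 < r) (hδ : 0 < δ) :
    ∫⁻ z in (ball x (2 * δ))ᶜ, ∫⁻ y in ball z δ ∩ ball x r,
        ENNReal.ofReal (dist y x ^ (1 - (finrank ℝ E : ℝ))) ∂ν ∂μ
      ≤ K * ENNReal.ofReal (4 ^ finrank ℝ E * ν.real (ball 0 1) ^ 2 * δ ^ finrank ℝ E * r) := by
  set d := finrank ℝ E
  set ω := ν.real (ball (0 : E) 1)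
  set w : E → ℝ≥0∞ := fun y => ENNReal.ofReal (dist y x ^ (1 - (d : ℝ)))
  have hw : Measurable w := by fun_prop
  have hS : MeasurableSet (ball x (2 * r) \ {x}) := measurableSet_ball.diff (measurableSet_singleton x)
  calc ∫⁻ z in (ball x (2 * δ))ᶜ, ∫⁻ y in ball z δ ∩ ball x r, w y ∂ν ∂μ
      ≤ ∫⁻ z in (ball x (2 * δ))ᶜ, (ball x (2 * r) \ {x}).indicator
          (fun z => ENNReal.ofReal (2 ^ d / 2 * ω * δ ^ d) * w z) z ∂μ :=
        setLIntegral_mono ((measurable_const.mul hw).indicator hS) fun z hz =>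
          setLIntegral_ball_inter_ball_dist_rpow_le_of_two_mul_le ν hδ (not_lt.1 hz)
    _ ≤ ∫⁻ z, (ball x (2 * r) \ {x}).indicator
          (fun z => ENNReal.ofReal (2 ^ d / 2 * ω * δ ^ d) * w z) z ∂μ :=
        setLIntegral_le_lintegral _ _
    _ = ENNReal.ofReal (2 ^ d / 2 * ω * δ ^ d) * ∫⁻ z in ball x (2 * r) \ {x}, w z ∂μ := by
        rw [lintegral_indicator hS, lintegral_const_mul _ hw]
    _ ≤ ENNReal.ofReal (2 ^ d / 2 * ω * δ ^ d) * (K * ENNReal.ofReal (ω * 2 ^ d * (2 * r))) := by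
        gcongr
        exact setLIntegral_ball_diff_dist_rpow_le_of_le_addHaar ν μ hK (by positivity)
    _ = K * ENNReal.ofReal (4 ^ d * ω ^ 2 * δ ^ d * r) := by
        rw [mul_left_comm, ← ENNReal.ofReal_mul (by positivity)]
        congr 2
        rw [show (4 : ℝ) ^ d = 2 ^ d * 2 ^ d by rw [← mul_pow]; norm_num]
        ring

theorem setLIntegral_dist_rpow_mul_measure_ball_le [SFinite μ]
    (hK : ∀ s, 0 < s → μ (ball x s) ≤ K * ν (ball x s)) (hr : 0 < r) (hδ : 0 < δ) :
    ∫⁻ y in ball x r, ENNReal.ofReal (dist y x ^ (1 - (finrank ℝ E : ℝ))) * μ (ball y δ) ∂ν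
      ≤ K * ENNReal.ofReal
          (2 * 4 ^ finrank ℝ E * ν.real (ball 0 1) ^ 2 * δ ^ finrank ℝ E * r) := by
  rw [lintegral_mul_measure_ball_eq ν μ (by fun_prop) _ δ,
    ← lintegral_add_compl _ (measurableSet_ball (x := x) (ε := 2 * δ))]
  calc _ ≤ K * ENNReal.ofReal (4 ^ finrank ℝ E * ν.real (ball 0 1) ^ 2 * δ ^ finrank ℝ E * r)
        + K * ENNReal.ofReal (4 ^ finrank ℝ E * ν.real (ball 0 1) ^ 2 * δ ^ finrank ℝ E * r) :=
        add_le_add (setLIntegral_ball_lintegral_ball_inter_ball_dist_rpow_le ν μ hK hr hδ)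
          (setLIntegral_compl_ball_lintegral_ball_inter_ball_dist_rpow_le ν μ hK hr hδ)
    _ = _ := by
        rw [← mul_add, ← ENNReal.ofReal_add (by positivity) (by positivity)]
        ring_nf

end FiniteDimensional

/-- For mollifications `μ_k = μ * χ_k` of a positive Radon measure `μ`:
`(1/r) ∫_{B(x,r)} |y-x|^{1-d} μ_k(y) dy ≤ C M(μ)(x)`, with `C = C(d, C₀)`. -/
theorem statement14 (d : ℕ) (hd : 1 ≤ d) (C₀ : ℝ) (hC₀ : 0 < C₀) :
    ∃ C : ℝ, 0 < C ∧
      ∀ μ : Measure (EuclideanSpace ℝ (Fin d)), IsLocallyFiniteMeasure μ →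
      ∀ χ : ℕ → EuclideanSpace ℝ (Fin d) → ℝ,
        (∀ k, 1 ≤ k → Function.support (χ k) ⊆ ball (0 : EuclideanSpace ℝ (Fin d)) (1 / (k : ℝ))) →
        (∀ k, 1 ≤ k → ∀ y, 0 ≤ χ k y) →
        (∀ k, 1 ≤ k → Integrable (χ k) volume) →
        (∀ k, 1 ≤ k → ∫ y, χ k y = 1) →
        (∀ k, 1 ≤ k → ∀ y, χ k y ≤ C₀ * (k : ℝ) ^ d) →
      ∀ (x : EuclideanSpace ℝ (Fin d)) (r : ℝ), 0 < r → ∀ k, 1 ≤ k →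
        (∫⁻ y in ball x r,
            ENNReal.ofReal (‖y - x‖ ^ (1 - (d : ℝ))) *
              (∫⁻ z, ENNReal.ofReal (χ k (y - z)) ∂μ))
          ≤ ENNReal.ofReal (C * r) * maximalMeas d μ x := by
  have : Nonempty (Fin d) := ⟨⟨0, hd⟩⟩
  set ω := volume.real (ball (0 : EuclideanSpace ℝ (Fin d)) 1)
  have hω : 0 < ω := ENNReal.toReal_pos (measure_ball_pos _ _ one_pos).ne' measure_ball_lt_top.ne
  refine ⟨C₀ * (2 * 4 ^ d * ω ^ 2), by positivity, fun μ _ χ hsupp _ _ _ hbdd x r hr k hk => ?_⟩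
  have hk₀ : (0 : ℝ) < k := by exact_mod_cast hk
  have hball := setLIntegral_dist_rpow_mul_measure_ball_le volume μ
    (fun s hs => measure_ball_le_maximalMeas_mul μ x hs) hr (one_div_pos.2 hk₀)
  rw [finrank_euclideanSpace_fin] at hball
  calc ∫⁻ y in ball x r, ENNReal.ofReal (‖y - x‖ ^ (1 - (d : ℝ))) *
          ∫⁻ z, ENNReal.ofReal (χ k (y - z)) ∂μ
      ≤ ∫⁻ y in ball x r, ENNReal.ofReal (C₀ * (k : ℝ) ^ d) *
          (ENNReal.ofReal (dist y x ^ (1 - (d : ℝ))) * μ (ball y (1 / k))) := by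
        refine lintegral_mono fun y => ?_
        rw [dist_eq_norm, mul_left_comm]
        gcongr
        exact lintegral_ofReal_sub_le_mul_measure_ball μ (hsupp k hk) (hbdd k hk) y
    _ = ENNReal.ofReal (C₀ * (k : ℝ) ^ d) * ∫⁻ y in ball x r,
          ENNReal.ofReal (dist y x ^ (1 - (d : ℝ))) * μ (ball y (1 / k)) :=
        lintegral_const_mul' _ _ ENNReal.ofReal_ne_top
    _ ≤ ENNReal.ofReal (C₀ * (k : ℝ) ^ d) *
          (maximalMeas d μ x * ENNReal.ofReal (2 * 4 ^ d * ω ^ 2 * (1 / k) ^ d * r)) := by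
        gcongr
    _ = ENNReal.ofReal (C₀ * (2 * 4 ^ d * ω ^ 2) * r) * maximalMeas d μ x := by
        rw [mul_left_comm, ← ENNReal.ofReal_mul (by positivity), mul_comm]
        congr 2
        rw [show C₀ * (k : ℝ) ^ d * (2 * 4 ^ d * ω ^ 2 * (1 / k) ^ d * r)
            = C₀ * (2 * 4 ^ d * ω ^ 2) * r * ((k : ℝ) * (1 / k)) ^ d by ring,
          mul_one_div_cancel hk₀.ne', one_pow, mul_one]
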